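/- arXiv:1709.05123 — 2 statements merged into one kernel-verified Lean document; each statement's English description precedes it below -/
import Mathlib

section
/- Let R = (A,→_R) and R' = (A',→_{R'}) be abstract reduction systems and G : A → A' a mapping such that: (C1') G is surjective; (C2') R and R' are normalizing; (C3') s →_R t implies that G(s) and G(t) are related by the reflexive-symmetric-transitive closure of →_{R'}, and conversely, if G(s) and G(t) are related by the reflexive-symmetric-transitive closure of →_{R'} then s and t are related by the reflexive-symmetric-transitive closure of →_R; (C4') if t is a normal form of R then G(t) is a normal form of R', and every preimage under G of a normal form of R' is a normal form of R; (C5') G is injective on normal forms of R. Then R is confluent if and only if R' is confluent. -/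
open scoped ENNReal NNReal

/-- An element `t` is a *normal form* of the reduction relation `r`
if there is no `u` with `r t u`. -/
def NormalForm {A : Type*} (r : A → A → Prop) (t : A) : Prop := ¬∃ u, r t u

/-- `NFof r s` is the set of normal forms reachable from `s`
via the reflexive-transitive closure of `r`. -/
def NFof {A : Type*} (r : A → A → Prop) (s : A) : Set A :=
  {t | NormalForm r t ∧ Relation.ReflTransGen r s t}

/-- `l` is a finite path from `s` to `t`: a nonempty list starting at `s`,
ending at `t`, whose consecutive elements are related by `r`.
(A list `[s₀, s₁, …, sₙ]` represents the path `s₀ → s₁ → ⋯ → sₙ`, `n ≥ 0`.) -/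
def IsPath {A : Type*} (r : A → A → Prop) (s t : A) (l : List A) : Prop :=
  l.Chain' r ∧ l.head? = some s ∧ l.getLast? = some t

/-- Confluence of an abstract reduction system. -/
def Confluent {A : Type*} (r : A → A → Prop) : Prop :=
  ∀ s s₁ s₂, Relation.ReflTransGen r s s₁ → Relation.ReflTransGen r s s₂ →
    ∃ t, Relation.ReflTransGen r s₁ t ∧ Relation.ReflTransGen r s₂ t

/-- An ARS is normalizing if every element reaches some normal form. -/
def Normalizing {A : Type*} (r : A → A → Prop) : Prop :=
  ∀ s, ∃ t, NormalForm r t ∧ Relation.ReflTransGen r s t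

/-- A probabilistic abstract reduction system (PARS) on a countable set `A`:
a reduction relation `rel` and probabilities `P : A → A → ℝ≥0` with
`P s t > 0` iff `s → t`, and `∑ₜ P s t = 1` for every reducible `s`. -/
structure PARS (A : Type*) [Countable A] where
  rel : A → A → Prop
  P : A → A → ℝ≥0
  pos_iff : ∀ s t, 0 < P s t ↔ rel s t
  sum_one : ∀ s, (∃ t, rel s t) → ∑' t, (P s t : ℝ≥0∞) = 1

namespace PARS

variable {A : Type*} [Countable A]

/-- The probability of a finite path `[s₀, s₁, …, sₙ]`,
namely `∏_{i=1}^n P(s_{i-1}, s_i)`. -/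
noncomputable def pathProb (S : PARS A) (l : List A) : ℝ≥0∞ :=
  ((l.zip l.tail).map fun p => (S.P p.1 p.2 : ℝ≥0∞)).prod

/-- `P(s →* t)`: the sum, over all finite paths from `s` to `t`,
of the path probabilities. -/
noncomputable def probReach (S : PARS A) (s t : A) : ℝ≥0∞ :=
  ∑' l : {l : List A // IsPath S.rel s t l}, S.pathProb l.1

/-- `∑_{t ∈ NF(s)} P(s →* t)`. -/
noncomputable def probNF (S : PARS A) (s : A) : ℝ≥0∞ :=
  ∑' t : NFof S.rel s, S.probReach s t.1

/-- `P(s →∞) := 1 - ∑_{t ∈ NF(s)} P(s →* t)`, the probability of diverging. -/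
noncomputable def probDiverge (S : PARS A) (s : A) : ℝ :=
  1 - (S.probNF s).toReal

/-- Almost-sure termination: every element diverges with probability `0`. -/
def ASTerminating (S : PARS A) : Prop := ∀ s, S.probDiverge s = 0

/-- Almost-sure convergence: whenever `s →* s₁` and `s →* s₂`, there is a
normal form `t` with `s₁ →* t`, `s₂ →* t` and `P(s₁ →* t) = P(s₂ →* t) = 1`. -/
def ASConvergent (S : PARS A) : Prop :=
  ∀ s s₁ s₂, Relation.ReflTransGen S.rel s s₁ → Relation.ReflTransGen S.rel s s₂ →
    ∃ t, NormalForm S.rel t ∧ Relation.ReflTransGen S.rel s₁ t ∧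
      Relation.ReflTransGen S.rel s₂ t ∧
      S.probReach s₁ t = 1 ∧ S.probReach s₂ t = 1

/-- Local almost-sure convergence: whenever `s → s₁` and `s → s₂`, there is a
normal form `t` with `s₁ →* t`, `s₂ →* t` and `P(s₁ →* t) = P(s₂ →* t) = 1`. -/
def LocallyASConvergent (S : PARS A) : Prop :=
  ∀ s s₁ s₂, S.rel s s₁ → S.rel s s₂ →
    ∃ t, NormalForm S.rel t ∧ Relation.ReflTransGen S.rel s₁ t ∧
      Relation.ReflTransGen S.rel s₂ t ∧
      S.probReach s₁ t = 1 ∧ S.probReach s₂ t = 1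

end PARS

private lemma eqvGen_lift {A A' : Type*} {r : A → A → Prop} {r' : A' → A' → Prop}
    {G : A → A'} (h : ∀ s t, r s t → Relation.EqvGen r' (G s) (G t)) :
    ∀ {a b : A}, Relation.EqvGen r a b → Relation.EqvGen r' (G a) (G b) := by
  intro a b hab
  induction hab with
  | rel x y hxy => exact h x y hxy
  | refl x => exact .refl _
  | symm x y _ ih => exact ih.symm _ _
  | trans x y z _ _ ih₁ ih₂ => exact ih₁.trans _ _ _ ih₂

private lemma churchRosser {A : Type*} {r : A → A → Prop} (h : Confluent r) :
    ∀ a b, Relation.EqvGen r a b →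
      ∃ c, Relation.ReflTransGen r a c ∧ Relation.ReflTransGen r b c := by
  intro a b hab
  induction hab with
  | rel a b hab => exact ⟨b, Relation.ReflTransGen.single hab, .refl⟩
  | refl a => exact ⟨a, .refl, .refl⟩
  | symm a b _ ih => exact ⟨ih.choose, ih.choose_spec.2, ih.choose_spec.1⟩
  | trans a b c _ _ ih₁ ih₂ =>
    obtain ⟨d, had, hbd⟩ := ih₁
    obtain ⟨e, hbe, hce⟩ := ih₂
    obtain ⟨f, hdf, hef⟩ := h b d e hbd hbe
    exact ⟨f, had.trans hdf, hce.trans hef⟩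

private lemma nf_rtg_eq {A : Type*} {r : A → A → Prop} {a b : A}
    (ha : NormalForm r a) (h : Relation.ReflTransGen r a b) : a = b := by
  rcases h.cases_head with h | ⟨c, hac, _⟩
  · exact h
  · exact absurd ⟨c, hac⟩ ha

/-- For a normalizing ARS, confluence is equivalent to uniqueness of
equivalent normal forms. -/
private lemma confluent_iff_un {A : Type*} {r : A → A → Prop} (hn : Normalizing r) :
    Confluent r ↔ ∀ a b, NormalForm r a → NormalForm r b → Relation.EqvGen r a b → a = b := by
  constructor
  · intro hc a b ha hb hab
    obtain ⟨c, hac, hbc⟩ := churchRosser hc a b hab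
    exact (nf_rtg_eq ha hac).trans (nf_rtg_eq hb hbc).symm
  · intro hun s s₁ s₂ h₁ h₂
    obtain ⟨n₁, hn₁, hr₁⟩ := hn s₁
    obtain ⟨n₂, hn₂, hr₂⟩ := hn s₂
    have key : ∀ {x y : A}, Relation.ReflTransGen r x y → Relation.EqvGen r x y := by
      intro x y hxy
      induction hxy with
      | refl => exact .refl _
      | tail _ h ih => exact ih.trans _ _ _ (.rel _ _ h)
    have heq : n₁ = n₂ :=
      hun n₁ n₂ hn₁ hn₂
        (((key (h₁.trans hr₁)).symm _ _).trans _ _ _ (key (h₂.trans hr₂)))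
    exact ⟨n₁, hr₁, heq ▸ hr₂⟩

/-- for ARS `r` on `A` and `r'` on `A'` and a map `G : A → A'`
satisfying (C1')–(C5'), `r` is confluent if and only if `r'` is confluent. -/
theorem confluent_iff_confluent_of_transformation
    {A A' : Type*} (r : A → A → Prop) (r' : A' → A' → Prop) (G : A → A')
    (hC1 : Function.Surjective G)
    (hC2 : Normalizing r ∧ Normalizing r')
    (hC3 : (∀ s t, r s t → Relation.EqvGen r' (G s) (G t)) ∧
           (∀ s t, Relation.EqvGen r' (G s) (G t) → Relation.EqvGen r s t))
    (hC4 : (∀ t, NormalForm r t → NormalForm r' (G t)) ∧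
           (∀ t', NormalForm r' t' → ∀ t, G t = t' → NormalForm r t))
    (hC5 : ∀ t u, NormalForm r t → NormalForm r u → G t = G u → t = u) :
    (Confluent r ↔ Confluent r') := by
  obtain ⟨hnr, hnr'⟩ := hC2
  obtain ⟨hC3a, hC3b⟩ := hC3
  obtain ⟨hC4a, hC4b⟩ := hC4
  rw [confluent_iff_un hnr, confluent_iff_un hnr']
  constructor
  · intro hun a' b' ha' hb' hab'
    obtain ⟨a, rfl⟩ := hC1 a'
    obtain ⟨b, rfl⟩ := hC1 b'
    have ha : NormalForm r a := hC4b _ ha' a rfl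
    have hb : NormalForm r b := hC4b _ hb' b rfl
    exact congrArg G (hun a b ha hb (hC3b a b hab'))
  · intro hun' a b ha hb hab
    have lift : Relation.EqvGen r' (G a) (G b) := eqvGen_lift hC3a hab
    exact hC5 a b ha hb (hun' (G a) (G b) (hC4a a ha) (hC4a b hb) lift)
end

section
/- Let R^P be a probabilistic abstract reduction system and s an element for which the set Δ∞(s) of infinite paths from s is countable. Define the probability of an infinite path s = s₀ → s₁ → s₂ → ⋯ as the infinite product ∏_{i≥1} P(s_{i-1}, s_i), i.e., the limit of the nonincreasing sequence of partial products ∏_{i=1}^n P(s_{i-1}, s_i). Then P(s →∞) = ∑_{δ ∈ Δ∞(s)} P(δ). -/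
open scoped ENNReal NNReal

/-!
Write `B n` for the total probability of the `n`-step paths from `s`. Splitting off the
paths that end in a normal form gives `B n + ∑_{j<n} (mass of j-step paths ending in a normal
form) = 1`, hence `P(s →∞) = inf_n B n`.

Every infinite path contributes its probability to each `B n`, and finitely many distinct
infinite paths have distinct prefixes from some length on, so `∑ P(δ) ≤ inf_n B n`.
Conversely, for `ε > 0` cut every infinite path `δ` at a prefix whose probability exceeds
`P(δ)` by less than `ε_δ`, where `∑ ε_δ < ε` (this is where countability is used). The limit
mass of the paths that avoid all cuts is `0`: by monotone convergence it is at most the sum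
of the corresponding limit masses below the one-step extensions, so if it were positive one
could extend step by step to an infinite path avoiding every cut.
-/

open Filter Finset

theorem ENNReal.tsum_iInf_of_antitone {ι : Type*} {f : ℕ → ι → ℝ≥0∞} (hf : Antitone f)
    (h0 : ∑' i, f 0 i ≠ ∞) : ∑' i, ⨅ n, f n i = ⨅ n, ∑' i, f n i := by
  let _ : MeasurableSpace ι := ⊤
  simpa only [MeasureTheory.lintegral_count' measurable_from_top] using
    MeasureTheory.lintegral_iInf (μ := MeasureTheory.Measure.count)
      (fun _ => measurable_from_top) hf
      (by rwa [MeasureTheory.lintegral_count' measurable_from_top])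

namespace List

variable {α : Type*}

theorem eventually_map_range_ne {f g : ℕ → α} (h : f ≠ g) :
    ∀ᶠ n in atTop, (range n).map f ≠ (range n).map g := by
  obtain ⟨i, hi⟩ := Function.ne_iff.1 h
  filter_upwards [eventually_gt_atTop i] with n hn heq
  exact hi (map_inj_left.1 heq i (mem_range.2 hn))

theorem exists_seq_of_forall_exists_append {Q : List α → Prop}
    (hQ : ∀ p, Q p → ∃ t, Q (p ++ [t])) {a : α} (ha : Q [a]) :
    ∃ f : ℕ → α, f 0 = a ∧ ∀ n, Q ((range (n + 1)).map f) := by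
  choose next hnext using hQ
  let L : ℕ → {p // Q p} := fun n =>
    Nat.rec ⟨[a], ha⟩ (fun _ p => ⟨p.1 ++ [next p.1 p.2], hnext p.1 p.2⟩) n
  refine ⟨fun n => (L n).1.getLastD a, rfl, fun n => ?_⟩
  suffices (L n).1 = (range (n + 1)).map (fun n => (L n).1.getLastD a) from this ▸ (L n).2
  induction n with
  | zero => rfl
  | succ n ih =>
    rw [range_succ, map_append, ← ih]
    simp [L]

end List

section ExtensionSum

variable {α : Type*}

noncomputable def extensionSum (w : List α → ℝ≥0∞) (p : List α) (n : ℕ) : ℝ≥0∞ :=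
  ∑' r : {r : List α // r.length = n}, w (p ++ r)

theorem extensionSum_zero (w : List α → ℝ≥0∞) (p : List α) :
    extensionSum w p 0 = w p := by
  have h : ∀ r : {r : List α // r.length = 0}, r = ⟨[], rfl⟩ :=
    fun r => Subtype.ext (List.length_eq_zero_iff.1 r.2)
  rw [extensionSum, tsum_eq_single ⟨[], rfl⟩ fun r hr => absurd (h r) hr, List.append_nil]

theorem extensionSum_succ (w : List α → ℝ≥0∞) (p : List α) (n : ℕ) :
    extensionSum w p (n + 1) = ∑' t, extensionSum w (p ++ [t]) n := by
  let e : α × {r : List α // r.length = n} ≃ {r : List α // r.length = n + 1} :=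
    { toFun := fun x => ⟨x.1 :: x.2.1, by simp [x.2.2]⟩
      invFun := fun r => (r.1.head (List.ne_nil_of_length_eq_add_one r.2),
        ⟨r.1.tail, by simp [r.2]⟩)
      left_inv := fun _ => rfl
      right_inv := fun r => Subtype.ext (List.cons_head_tail _) }
  rw [extensionSum, ← e.tsum_eq, ENNReal.tsum_prod']
  simp only [extensionSum, List.append_assoc, List.singleton_append]
  rfl

/-- Only nonempty `p` are constrained: `pathProb` gives weight `1` to `[]` and to every `[t]`. -/
def IsSubstochastic (w : List α → ℝ≥0∞) : Prop :=
  ∀ p, p ≠ [] → ∑' t, w (p ++ [t]) ≤ w p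

namespace IsSubstochastic

variable {w : List α → ℝ≥0∞}

theorem extensionSum_le (hw : IsSubstochastic w) {p : List α} (hp : p ≠ []) (n : ℕ) :
    extensionSum w p n ≤ w p := by
  induction n generalizing p with
  | zero => rw [extensionSum_zero]
  | succ n ih =>
    rw [extensionSum_succ]
    exact (ENNReal.tsum_le_tsum fun t => ih (by simp)).trans (hw p hp)

theorem antitone_extensionSum (hw : IsSubstochastic w) {p : List α} (hp : p ≠ []) :
    Antitone (extensionSum w p) := by
  refine antitone_nat_of_succ_le fun n => ?_
  induction n generalizing p with
  | zero => rw [extensionSum_zero]; exact hw.extensionSum_le hp 1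
  | succ n ih =>
    rw [extensionSum_succ, extensionSum_succ w p n]
    exact ENNReal.tsum_le_tsum fun t => ih (by simp)

theorem indicator (hw : IsSubstochastic w) {C : Set (List α)}
    (hC : ∀ l t, l ++ [t] ∈ C → l ∈ C) :
    IsSubstochastic (C.indicator w) := by
  intro p hp
  by_cases hpC : p ∈ C
  · rw [Set.indicator_of_mem hpC]
    exact (ENNReal.tsum_le_tsum fun t => Set.indicator_le_self C w _).trans (hw p hp)
  · simp [Set.indicator_of_notMem (fun h => hpC (hC p _ h))]

theorem iInf_extensionSum_le_tsum (hw : IsSubstochastic w) {p : List α} (hp : p ≠ [])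
    (hfin : w p ≠ ∞) :
    ⨅ n, extensionSum w p n ≤ ∑' t, ⨅ n, extensionSum w (p ++ [t]) n := by
  rw [ENNReal.tsum_iInf_of_antitone (f := fun n t => extensionSum w (p ++ [t]) n)
    (fun m n hmn t => hw.antitone_extensionSum (by simp) hmn)]
  · calc ⨅ n, extensionSum w p n ≤ ⨅ n, extensionSum w p (n + 1) :=
          le_iInf fun n => iInf_le _ _
      _ = ⨅ n, ∑' t, extensionSum w (p ++ [t]) n := by simp only [extensionSum_succ]
  · simpa only [extensionSum_zero] using ne_top_of_le_ne_top hfin (hw p hp)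

theorem exists_seq_forall_ne_zero (hw : IsSubstochastic w) (hfin : ∀ p, w p ≠ ∞) {a : α}
    (ha : ⨅ n, extensionSum w [a] n ≠ 0) :
    ∃ f : ℕ → α, f 0 = a ∧ ∀ n, w ((List.range (n + 1)).map f) ≠ 0 := by
  have hstep : ∀ p, (p ≠ [] ∧ ⨅ n, extensionSum w p n ≠ 0) →
      ∃ t, p ++ [t] ≠ [] ∧ ⨅ n, extensionSum w (p ++ [t]) n ≠ 0 := by
    rintro p ⟨hp, hpos⟩
    by_contra! h
    exact hpos (le_zero_iff.1 ((hw.iInf_extensionSum_le_tsum hp (hfin p)).trans (by simp [h])))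
  obtain ⟨f, hf0, hf⟩ := List.exists_seq_of_forall_exists_append hstep ⟨by simp, ha⟩
  refine ⟨f, hf0, fun n => ?_⟩
  have := (hf n).2
  contrapose! this
  exact le_zero_iff.1 ((iInf_le _ 0).trans (by rw [extensionSum_zero, this]))

theorem extensionSum_indicator_prefix_le (hw : IsSubstochastic w) {q : List α} (hq : q ≠ [])
    (p : List α) (n : ℕ) :
    extensionSum ({l | q <+: l}.indicator w) p n ≤ w q := by
  let T := {r : {r : List α // r.length = n} | q <+: p ++ r.1}
  let g : T → {r : List α // r.length = p.length + n - q.length} := fun r =>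
    ⟨(p ++ r.1.1).drop q.length, by simp [r.1.2]⟩
  have hg : ∀ r, q ++ (g r).1 = p ++ r.1.1 := fun r => List.prefix_iff_eq_append.1 r.2
  have hinj : Function.Injective g := fun r r' h =>
    Subtype.ext <| Subtype.ext <| List.append_cancel_left <| by rw [← hg, ← hg, h]
  calc extensionSum ({l | q <+: l}.indicator w) p n
      = ∑' r : T, w (q ++ (g r).1) := by
        simp only [hg, extensionSum, _root_.tsum_subtype T fun r => w (p ++ r.1)]
        rfl
    _ ≤ extensionSum w q (p.length + n - q.length) :=
        ENNReal.tsum_comp_le_tsum_of_injective hinj (fun r => w (q ++ r.1))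
    _ ≤ w q := hw.extensionSum_le hq _

theorem extensionSum_le_extensionSum_avoiding_add (hw : IsSubstochastic w) {ι : Type*}
    (q : ι → List α) (hq : ∀ i, q i ≠ []) (p : List α) (n : ℕ) :
    extensionSum w p n ≤
      extensionSum ({l | ∀ i, ¬q i <+: l}.indicator w) p n + ∑' i, w (q i) := by
  set C := {l | ∀ i, ¬q i <+: l}
  have hhit : ∀ l, Cᶜ.indicator w l ≤ ∑' i, {l | q i <+: l}.indicator w l := by
    intro l
    by_cases hl : l ∈ C
    · simp [hl]
    · obtain ⟨i, hi⟩ : ∃ i, q i <+: l := by simpa [C] using hl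
      rw [Set.indicator_of_mem (Set.mem_compl hl)]
      exact (Set.indicator_of_mem (s := {l | q i <+: l}) hi w).symm.le.trans
        (ENNReal.le_tsum i)
  calc extensionSum w p n
      = extensionSum (C.indicator w) p n + extensionSum (Cᶜ.indicator w) p n := by
        simp only [extensionSum, ← ENNReal.tsum_add, Set.indicator_self_add_compl_apply]
    _ ≤ extensionSum (C.indicator w) p n +
        ∑' i, extensionSum ({l | q i <+: l}.indicator w) p n := by
        gcongr
        simp only [extensionSum]
        rw [ENNReal.tsum_comm]
        exact ENNReal.tsum_le_tsum fun r => hhit _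
    _ ≤ extensionSum (C.indicator w) p n + ∑' i, w (q i) := by
        gcongr with i
        exact hw.extensionSum_indicator_prefix_le (hq i) p n

end IsSubstochastic

end ExtensionSum

namespace PARS

variable {A : Type*} [Countable A] (S : PARS A)

theorem P_eq_zero_iff {x t : A} : S.P x t = 0 ↔ ¬S.rel x t := by
  rw [← S.pos_iff, pos_iff_ne_zero, not_not]

theorem tsum_P_of_normalForm {x : A} (hx : NormalForm S.rel x) :
    ∑' t, (S.P x t : ℝ≥0∞) = 0 := by
  simp [(S.P_eq_zero_iff).2 fun h => hx ⟨_, h⟩]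

@[simp]
theorem pathProb_singleton (x : A) : S.pathProb [x] = 1 := by
  simp [pathProb]

theorem pathProb_cons_cons (x y : A) (l : List A) :
    S.pathProb (x :: y :: l) = S.P x y * S.pathProb (y :: l) := by
  simp [pathProb]

theorem pathProb_ne_top (l : List A) : S.pathProb l ≠ ∞ := by
  induction l with
  | nil => simp [pathProb]
  | cons x l ih =>
    cases l with
    | nil => simp
    | cons y l => rw [pathProb_cons_cons]; exact ENNReal.mul_ne_top ENNReal.coe_ne_top ih

theorem pathProb_append_singleton {p : List A} (hp : p ≠ []) (t : A) :
    S.pathProb (p ++ [t]) = S.pathProb p * S.P (p.getLast hp) t := by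
  induction p with
  | nil => contradiction
  | cons x p ih =>
    cases p with
    | nil => simp [pathProb]
    | cons y p =>
      rw [List.cons_append, List.cons_append, pathProb_cons_cons, ← List.cons_append,
        ih (List.cons_ne_nil _ _), pathProb_cons_cons, List.getLast_cons_cons, mul_assoc]

theorem isChain_of_pathProb_ne_zero {l : List A} (h : S.pathProb l ≠ 0) : l.IsChain S.rel := by
  induction l with
  | nil => exact .nil
  | cons x l ih =>
    cases l with
    | nil => exact .singleton x
    | cons y l =>
      rw [pathProb_cons_cons, mul_ne_zero_iff] at h
      exact List.isChain_cons_cons.2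
        ⟨not_not.1 ((S.P_eq_zero_iff).not.1 (by exact_mod_cast h.1)), ih h.2⟩

theorem pathProb_map_range (f : ℕ → A) (n : ℕ) :
    S.pathProb ((List.range (n + 1)).map f) =
      ∏ i ∈ range n, (S.P (f i) (f (i + 1)) : ℝ≥0∞) := by
  induction n with
  | zero => simp
  | succ n ih =>
    rw [List.range_succ, List.map_append, List.map_singleton,
      pathProb_append_singleton _ (by simp), ih, prod_range_succ, List.getLast_map,
      List.getLast_range]
    rfl

def endsInNormalForm : Set (List A) := {l | ∃ t ∈ l.getLast?, NormalForm S.rel t}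

theorem tsum_pathProb_append_add_indicator {p : List A} (hp : p ≠ []) :
    ∑' t, S.pathProb (p ++ [t]) + S.endsInNormalForm.indicator S.pathProb p =
      S.pathProb p := by
  simp only [S.pathProb_append_singleton hp, ENNReal.tsum_mul_left]
  by_cases hnf : NormalForm S.rel (p.getLast hp)
  · have : p ∈ S.endsInNormalForm := ⟨_, List.getLast?_eq_some_getLast hp, hnf⟩
    simp [S.tsum_P_of_normalForm hnf, this]
  · have : p ∉ S.endsInNormalForm := by
      rintro ⟨t, ht, htnf⟩
      rw [List.getLast?_eq_some_getLast hp, Option.mem_some_iff] at ht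
      exact hnf (ht ▸ htnf)
    simp [S.sum_one _ (not_not.1 hnf), this]

theorem isSubstochastic_pathProb : IsSubstochastic S.pathProb := fun _ hp =>
  le_self_add.trans_eq (S.tsum_pathProb_append_add_indicator hp)

theorem extensionSum_pathProb_add_sum {p : List A} (hp : p ≠ []) (n : ℕ) :
    extensionSum S.pathProb p n +
      ∑ j ∈ range n, extensionSum (S.endsInNormalForm.indicator S.pathProb) p j =
      S.pathProb p := by
  induction n generalizing p with
  | zero => simp [extensionSum_zero]
  | succ n ih =>
    simp only [extensionSum_succ, sum_range_succ', extensionSum_zero]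
    rw [← Summable.tsum_finsetSum fun _ _ => ENNReal.summable, ← add_assoc,
      ← ENNReal.tsum_add]
    simp only [ih (List.append_ne_nil_of_right_ne_nil _ (List.cons_ne_nil _ _))]
    exact S.tsum_pathProb_append_add_indicator hp

theorem probNF_eq_tsum_extensionSum (s : A) :
    S.probNF s = ∑' n, extensionSum (S.endsInNormalForm.indicator S.pathProb) [s] n := by
  set w := S.endsInNormalForm.indicator S.pathProb
  let g : (Σ t : NFof S.rel s, {l : List A // IsPath S.rel s t l}) → List A :=
    fun x => x.2.1.tail
  have hg : ∀ x, s :: g x = x.2.1 := fun x => (List.eq_cons_of_mem_head? x.2.2.2.1).symm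
  have hinj : Function.Injective g := by
    rintro ⟨⟨t, ht⟩, l, hl⟩ ⟨⟨t', ht'⟩, l', hl'⟩ h
    obtain rfl : l = l' := by
      rw [List.eq_cons_of_mem_head? hl.2.1, List.eq_cons_of_mem_head? hl'.2.1]
      exact congrArg (s :: ·) h
    obtain rfl : t = t' := Option.some.inj (hl.2.2.symm.trans hl'.2.2)
    rfl
  have hsupp : Function.support (fun r => w (s :: r)) ⊆ Set.range g := by
    intro r hr
    obtain ⟨⟨t, ht, hnf⟩, hπ⟩ := Set.indicator_apply_ne_zero.1 hr
    have hchain := S.isChain_of_pathProb_ne_zero hπ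
    obtain ⟨_, hlast⟩ := List.mem_getLast?_eq_getLast ht
    exact ⟨⟨⟨t, hnf, List.relationReflTransGen_of_exists_isChain_cons r hchain hlast.symm⟩,
      s :: r, hchain, rfl, ht⟩, rfl⟩
  calc S.probNF s
      = ∑' x : Σ t : NFof S.rel s, {l : List A // IsPath S.rel s t l}, S.pathProb x.2.1 :=
        (ENNReal.tsum_sigma'
          fun x : Σ t : NFof S.rel s, {l : List A // IsPath S.rel s t l} => S.pathProb x.2.1).symm
    _ = ∑' x, w (s :: g x) := by
        congr 1 with x
        rw [hg]
        exact (Set.indicator_of_mem (show x.2.1 ∈ S.endsInNormalForm from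
          ⟨x.1.1, x.2.2.2.2, x.1.2.1⟩) _).symm
    _ = ∑' r, w (s :: r) := hinj.tsum_eq hsupp
    _ = ∑' n, extensionSum w [s] n := by
        rw [← (Equiv.sigmaFiberEquiv List.length).tsum_eq, ENNReal.tsum_sigma']
        rfl

theorem probNF_add_iInf_extensionSum (s : A) :
    S.probNF s + ⨅ n, extensionSum S.pathProb [s] n = 1 := by
  set D := fun j => extensionSum (S.endsInNormalForm.indicator S.pathProb) [s] j
  have hsum : ∀ n, extensionSum S.pathProb [s] n + ∑ j ∈ range n, D j = 1 := fun n => by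
    simpa using S.extensionSum_pathProb_add_sum (List.cons_ne_nil s []) n
  have hD : ∀ n, ∑ j ∈ range n, D j ≤ 1 := fun n => le_add_self.trans_eq (hsum n)
  have hB : ⨅ n, extensionSum S.pathProb [s] n = 1 - S.probNF s := by
    rw [probNF_eq_tsum_extensionSum, ENNReal.tsum_eq_iSup_nat,
      ENNReal.sub_iSup ENNReal.one_ne_top]
    exact iInf_congr fun n =>
      ENNReal.eq_sub_of_add_eq (ne_top_of_le_ne_top ENNReal.one_ne_top (hD n)) (hsum n)
  rw [hB, add_tsub_cancel_of_le]
  rw [probNF_eq_tsum_extensionSum, ENNReal.tsum_eq_iSup_nat]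
  exact iSup_le hD

theorem probDiverge_eq_toReal_iInf_extensionSum (s : A) :
    S.probDiverge s = (⨅ n, extensionSum S.pathProb [s] n).toReal := by
  have h := S.probNF_add_iInf_extensionSum s
  have hfin : S.probNF s ≠ ∞ := ne_top_of_le_ne_top ENNReal.one_ne_top (le_self_add.trans_eq h)
  have hinf : ⨅ n, extensionSum S.pathProb [s] n ≠ ∞ :=
    ne_top_of_le_ne_top ENNReal.one_ne_top (le_add_self.trans_eq h)
  have h' := congrArg ENNReal.toReal h
  rw [ENNReal.toReal_add hfin hinf, ENNReal.toReal_one] at h'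
  rw [probDiverge]
  linarith

def infinitePaths (s : A) : Set (ℕ → A) := {f | f 0 = s ∧ ∀ n, S.rel (f n) (f (n + 1))}

noncomputable def infinitePathProb (f : ℕ → A) : ℝ≥0∞ :=
  ⨅ n, ∏ i ∈ range n, (S.P (f i) (f (i + 1)) : ℝ≥0∞)

theorem infinitePathProb_eq_iInf_pathProb (f : ℕ → A) :
    S.infinitePathProb f = ⨅ n, S.pathProb ((List.range (n + 1)).map f) := by
  simp only [infinitePathProb, pathProb_map_range]

theorem tsum_infinitePathProb_le_extensionSum (s : A) (m : ℕ) :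
    ∑' δ : S.infinitePaths s, S.infinitePathProb δ ≤ extensionSum S.pathProb [s] m := by
  classical
  rw [ENNReal.tsum_eq_iSup_sum]
  refine iSup_le fun F => ?_
  have hdist : ∀ᶠ N in atTop, ∀ a ∈ F, ∀ b ∈ F, a ≠ b →
      (List.range (N + 1)).map a.1 ≠ (List.range (N + 1)).map b.1 := by
    simp only [F.eventually_all, eventually_imp_distrib_left]
    exact fun a _ b _ hab => tendsto_add_atTop_nat 1 |>.eventually <|
      List.eventually_map_range_ne (Subtype.coe_ne_coe.2 hab)
  obtain ⟨N, hN, hmN⟩ := (hdist.and (eventually_ge_atTop m)).exists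
  let r : S.infinitePaths s → {r : List A // r.length = N} := fun δ =>
    ⟨(List.range N).map fun i => δ.1 (i + 1), by simp⟩
  have hr : ∀ δ, [s] ++ (r δ).1 = (List.range (N + 1)).map δ.1 := fun δ => by
    simp [r, List.range_succ_eq_map, δ.2.1]
  calc ∑ δ ∈ F, S.infinitePathProb δ ≤ ∑ δ ∈ F, S.pathProb ([s] ++ (r δ).1) :=
        sum_le_sum fun δ _ => by
          rw [hr, infinitePathProb_eq_iInf_pathProb]
          exact iInf_le _ N
    _ = ∑ x ∈ F.image r, S.pathProb ([s] ++ x.1) := by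
        refine (sum_image (f := fun x : {r : List A // r.length = N} => S.pathProb ([s] ++ x.1))
          fun a ha b hb hab => ?_).symm
        by_contra hne
        exact hN a ha b hb hne (by rw [← hr, ← hr, hab])
    _ ≤ extensionSum S.pathProb [s] N := ENNReal.sum_le_tsum _
    _ ≤ extensionSum S.pathProb [s] m :=
        S.isSubstochastic_pathProb.antitone_extensionSum (List.cons_ne_nil s []) hmN

theorem iInf_extensionSum_le_of_cover {ι : Type*} (q : ι → List A) (hq : ∀ i, q i ≠ [])
    (s : A)
    (hcover : ∀ δ ∈ S.infinitePaths s, ∃ i n, q i <+: (List.range (n + 1)).map δ) :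
    ⨅ n, extensionSum S.pathProb [s] n ≤ ∑' i, S.pathProb (q i) := by
  set C := {l | ∀ i, ¬q i <+: l}
  have hw : IsSubstochastic (C.indicator S.pathProb) :=
    S.isSubstochastic_pathProb.indicator fun l t hl i hi =>
      hl i (hi.trans (List.prefix_append _ _))
  have hzero : ⨅ n, extensionSum (C.indicator S.pathProb) [s] n = 0 := by
    by_contra hne
    obtain ⟨f, hf0, hf⟩ := hw.exists_seq_forall_ne_zero
      (fun l => ne_top_of_le_ne_top (S.pathProb_ne_top l) (Set.indicator_le_self _ _ l)) hne
    have hC : ∀ n, (List.range (n + 1)).map f ∈ C := fun n => by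
      by_contra h; exact hf n (Set.indicator_of_notMem h _)
    have hrel : ∀ n, S.rel (f n) (f (n + 1)) := fun n => by
      have := S.isChain_of_pathProb_ne_zero (Set.indicator_apply_ne_zero.1 (hf (n + 1))).2
      rw [List.isChain_map, List.isChain_range_succ] at this
      exact this n n.lt_succ_self
    obtain ⟨i, n, hi⟩ := hcover f ⟨hf0, hrel⟩
    exact hC n i hi
  calc ⨅ n, extensionSum S.pathProb [s] n
      ≤ ⨅ n, (extensionSum (C.indicator S.pathProb) [s] n + ∑' i, S.pathProb (q i)) :=
        iInf_mono fun n =>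
          S.isSubstochastic_pathProb.extensionSum_le_extensionSum_avoiding_add q hq [s] n
    _ = ∑' i, S.pathProb (q i) := by rw [← ENNReal.iInf_add, hzero, zero_add]

theorem iInf_extensionSum_le_tsum_infinitePathProb (s : A)
    (hcount : Countable (S.infinitePaths s)) :
    ⨅ n, extensionSum S.pathProb [s] n ≤
      ∑' δ : S.infinitePaths s, S.infinitePathProb δ := by
  refine ENNReal.le_of_forall_pos_le_add fun ε hε _ => ?_
  obtain ⟨η, hη, hηε⟩ :=
    ENNReal.exists_pos_sum_of_countable (ENNReal.coe_ne_zero.2 hε.ne') (S.infinitePaths s)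
  have hcut : ∀ δ : S.infinitePaths s, ∃ n,
      S.pathProb ((List.range (n + 1)).map δ.1) < S.infinitePathProb δ + η δ := fun δ => by
    have hfin : S.infinitePathProb δ ≠ ∞ :=
      ne_top_of_le_ne_top ENNReal.one_ne_top ((iInf_le _ 0).trans_eq (by simp))
    rw [← iInf_lt_iff, ← infinitePathProb_eq_iInf_pathProb]
    exact ENNReal.lt_add_right hfin (ENNReal.coe_ne_zero.2 (hη δ).ne')
  choose n hn using hcut
  calc ⨅ n, extensionSum S.pathProb [s] n
      ≤ ∑' δ : S.infinitePaths s, S.pathProb ((List.range (n δ + 1)).map δ.1) :=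
        S.iInf_extensionSum_le_of_cover _ (fun δ => by simp) s
          fun δ hδ => ⟨⟨δ, hδ⟩, n ⟨δ, hδ⟩, List.prefix_refl _⟩
    _ ≤ ∑' δ : S.infinitePaths s, (S.infinitePathProb δ + η δ) :=
        ENNReal.tsum_le_tsum fun δ => (hn δ).le
    _ ≤ ∑' δ : S.infinitePaths s, S.infinitePathProb δ + ε := by
        rw [ENNReal.tsum_add]
        gcongr

end PARS

/-- if the set `Δ∞(s)` of infinite paths from `s` is countable,
then `P(s →∞)` equals the sum over all infinite paths `δ ∈ Δ∞(s)` of the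
probability of `δ`, i.e. the limit (= infimum, as the sequence is
nonincreasing) of the partial products `∏_{i=1}^n P(s_{i-1}, s_i)`. -/
theorem probDiverge_eq_tsum_infinite_paths
    {A : Type*} [Countable A] (S : PARS A) (s : A)
    (hcount : Countable {f : ℕ → A // f 0 = s ∧ ∀ n, S.rel (f n) (f (n + 1))}) :
    S.probDiverge s =
      (∑' δ : {f : ℕ → A // f 0 = s ∧ ∀ n, S.rel (f n) (f (n + 1))},
        ⨅ n, ∏ i ∈ Finset.range n, (S.P (δ.1 i) (δ.1 (i + 1)) : ℝ≥0∞)).toReal := by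
  rw [S.probDiverge_eq_toReal_iInf_extensionSum,
    le_antisymm (S.iInf_extensionSum_le_tsum_infinitePathProb s hcount)
      (le_iInf (S.tsum_infinitePathProb_le_extensionSum s))]
  rfl
end
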